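/- For the ℂ××ℂ× action (λ,μ)·(x₀,x₁,y₀,y₁) = (λx₀, λx₁, μy₀, μλ^{-n}y₁) on ℂ⁴ with moment map μ(x,y) = -(1/2)(‖x‖² - n|y₁|² - c₀, ‖y‖² - c₁) for c₀, c₁ > 0, the sets of stable and semistable points coincide and equal (ℂ²∖{0}) × (ℂ²∖{0}). -/

import Mathlib

/-!
STATEMENT 10: For the `ℂ× × ℂ×`-action
`(λ,μ)·(x₀,x₁,y₀,y₁) = (λx₀, λx₁, μy₀, μλ^{-n}y₁)` on `ℂ⁴` with moment map
`μ(x,y) = -(1/2)(‖x‖² - n|y₁|² - c₀, ‖y‖² - c₁)`, `c₀, c₁ > 0`, the sets of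
stable and semistable points (defined via the Hilbert–Mumford criterion on
μ-weights, the weight of `(v, ξ)` being the limit of
`t ↦ ⟨μ(exp(√-1 t ξ) v), ξ⟩` as `t → ∞`, computed here as a `limsup` in
`EReal`; `ξ = (a,b)` acts by `√-1 diag(a,a,b,b-na)`, so `exp(√-1 t ξ)` scales
the coordinates by `e^{-at}, e^{-at}, e^{-bt}, e^{-(b-na)t}`) coincide and
equal `(ℂ²∖{0}) × (ℂ²∖{0})`.
-/

open Filter

namespace Stmt10

variable (n : ℕ) (c₀ c₁ : ℝ)

/-- `⟨μ(exp(√-1 t ξ) v), ξ⟩` for `ξ = (a, b)` and `v = (x₀, x₁, y₀, y₁)`. -/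
noncomputable def momentAlongFlow (ξ : ℝ × ℝ) (v : ℂ × ℂ × ℂ × ℂ) (t : ℝ) : ℝ :=
  -(1/2 : ℝ) *
    (ξ.1 * (Real.exp (-ξ.1 * t) ^ 2 * (‖v.1‖ ^ 2 + ‖v.2.1‖ ^ 2)
          - n * Real.exp (-(ξ.2 - n * ξ.1) * t) ^ 2 * ‖v.2.2.2‖ ^ 2 - c₀)
    + ξ.2 * (Real.exp (-ξ.2 * t) ^ 2 * ‖v.2.2.1‖ ^ 2
          + Real.exp (-(ξ.2 - n * ξ.1) * t) ^ 2 * ‖v.2.2.2‖ ^ 2 - c₁))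

/-- The μ-weight `w_μ^ξ(v)`, as an extended real number. -/
noncomputable def weight (ξ : ℝ × ℝ) (v : ℂ × ℂ × ℂ × ℂ) : EReal :=
  Filter.limsup (fun t : ℝ => ((momentAlongFlow n c₀ c₁ ξ v t : ℝ) : EReal)) atTop

/-- Hilbert–Mumford: `v` is stable iff all μ-weights at nonzero `ξ` are positive. -/
noncomputable def IsStable (v : ℂ × ℂ × ℂ × ℂ) : Prop :=
  ∀ ξ : ℝ × ℝ, ξ ≠ 0 → 0 < weight n c₀ c₁ ξ v

/-- Hilbert–Mumford: `v` is semistable iff all μ-weights at nonzero `ξ` are nonnegative. -/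
noncomputable def IsSemistable (v : ℂ × ℂ × ℂ × ℂ) : Prop :=
  ∀ ξ : ℝ × ℝ, ξ ≠ 0 → 0 ≤ weight n c₀ c₁ ξ v

end Stmt10

/-!
Along the flow of `ξ = (a, b)`, the pairing `⟨μ, ξ⟩` is `(a c₀ + b c₁)/2` plus, for each weight
`s ∈ {a, b, b - n a}` of the action, a term `-(1/2) s K e^{-2st}`, where `K` is the squared norm
of the component of `v` of that weight. Such a term tends to `0` unless `s < 0 < K`, in which case
it tends to `+∞` while the others stay bounded below. So the weight is `+∞` as soon as some
component of negative weight is nonzero, and `(a c₀ + b c₁)/2` otherwise. If `x = 0` (resp.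
`y = 0`), the direction `(-1, 0)` (resp. `(0, -1)`) has weight `-c₀/2` (resp. `-c₁/2`). If
`x ≠ 0` and `y ≠ 0`, a finite weight forces `a ≥ 0`, then `b ≥ 0` (otherwise `b` and `b - n a`
are both negative and `y` would vanish), so it is positive for `ξ ≠ 0`.
-/

namespace Stmt10

open Filter Topology

noncomputable def weightTerm (s K t : ℝ) : ℝ := -(1/2) * (s * K * Real.exp (-s * t) ^ 2)

section weightTerm

variable {s K : ℝ}

lemma tendsto_weightTerm_zero (h : 0 ≤ s ∨ K = 0) :
    Tendsto (weightTerm s K) atTop (𝓝 0) := by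
  unfold weightTerm
  rcases h with hs | rfl
  · rcases hs.eq_or_lt with rfl | hs
    · simp
    have hexp : Tendsto (fun t => Real.exp (-s * t)) atTop (𝓝 0) :=
      Real.tendsto_exp_atBot.comp (tendsto_id.const_mul_atTop_of_neg (neg_lt_zero.2 hs))
    simpa [mul_assoc] using (hexp.pow 2).const_mul (-(1/2) * (s * K))
  · simp

lemma tendsto_weightTerm_atTop (hs : s < 0) (hK : 0 < K) :
    Tendsto (weightTerm s K) atTop atTop := by
  have hexp : Tendsto (fun t => Real.exp (-s * t) ^ 2) atTop atTop :=
    (tendsto_pow_atTop two_ne_zero).comp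
      (Real.tendsto_exp_atTop.comp (tendsto_id.const_mul_atTop (neg_pos.2 hs)))
  refine (hexp.const_mul_atTop (by nlinarith : 0 < -(1/2) * (s * K))).congr fun t => ?_
  simp only [weightTerm]; ring

lemma neg_half_abs_mul_le_weightTerm (hK : 0 ≤ K) {t : ℝ} (ht : 0 ≤ t) :
    -(1/2) * (|s| * K) ≤ weightTerm s K t := by
  have hexp : 0 ≤ Real.exp (-s * t) ^ 2 := by positivity
  unfold weightTerm
  rcases le_or_gt s 0 with hs | hs
  · nlinarith [abs_of_nonpos hs, mul_nonneg (mul_nonneg (neg_nonneg.2 hs) hK) hexp]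
  · have hle : Real.exp (-s * t) ^ 2 ≤ 1 :=
      pow_le_one₀ (Real.exp_pos _).le (Real.exp_le_one_iff.2 (by nlinarith))
    nlinarith [abs_of_pos hs, mul_nonneg (mul_nonneg hs.le hK) (sub_nonneg.2 hle)]

end weightTerm

section sum

variable {ι : Type*} [Fintype ι] {s K : ι → ℝ}

lemma tendsto_sum_weightTerm_zero (h : ∀ i, 0 ≤ s i ∨ K i = 0) :
    Tendsto (fun t => ∑ i, weightTerm (s i) (K i) t) atTop (𝓝 0) := by
  simpa using tendsto_finsetSum Finset.univ fun i _ => tendsto_weightTerm_zero (h i)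

lemma tendsto_sum_weightTerm_atTop (hK : ∀ i, 0 ≤ K i) {i : ι} (hs : s i < 0) (hKi : 0 < K i) :
    Tendsto (fun t => ∑ j, weightTerm (s j) (K j) t) atTop atTop := by
  classical
  simp_rw [← Finset.add_sum_erase _ _ (Finset.mem_univ i)]
  refine tendsto_atTop_add_right_of_le' _ (∑ j ∈ Finset.univ.erase i, -(1/2) * (|s j| * K j))
    (tendsto_weightTerm_atTop hs hKi) ?_
  filter_upwards [eventually_ge_atTop 0] with t ht
  exact Finset.sum_le_sum fun j _ => neg_half_abs_mul_le_weightTerm (hK j) ht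

end sum

variable {n : ℕ} {c₀ c₁ : ℝ} {ξ : ℝ × ℝ} {v : ℂ × ℂ × ℂ × ℂ}

noncomputable def flowExponent (n : ℕ) (ξ : ℝ × ℝ) : Fin 3 → ℝ := ![ξ.1, ξ.2, ξ.2 - n * ξ.1]

noncomputable def coordSqNorm (v : ℂ × ℂ × ℂ × ℂ) : Fin 3 → ℝ :=
  ![‖v.1‖ ^ 2 + ‖v.2.1‖ ^ 2, ‖v.2.2.1‖ ^ 2, ‖v.2.2.2‖ ^ 2]

lemma coordSqNorm_nonneg (v : ℂ × ℂ × ℂ × ℂ) (i : Fin 3) : 0 ≤ coordSqNorm v i := by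
  fin_cases i <;> simp [coordSqNorm]
  positivity

lemma coordSqNorm_zero_eq_zero_iff : coordSqNorm v 0 = 0 ↔ v.1 = 0 ∧ v.2.1 = 0 := by
  simp [coordSqNorm, add_eq_zero_iff_of_nonneg (sq_nonneg ‖v.1‖) (sq_nonneg ‖v.2.1‖)]

lemma momentAlongFlow_eq (t : ℝ) :
    momentAlongFlow n c₀ c₁ ξ v t
      = (ξ.1 * c₀ + ξ.2 * c₁) / 2 + ∑ i, weightTerm (flowExponent n ξ i) (coordSqNorm v i) t := by
  simp only [momentAlongFlow, weightTerm, flowExponent, coordSqNorm, Fin.sum_univ_three,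
    Matrix.cons_val_zero, Matrix.cons_val_one, Matrix.cons_val_two, Matrix.head_cons,
    Matrix.tail_cons]
  ring

lemma weight_eq_of_forall (h : ∀ i, 0 ≤ flowExponent n ξ i ∨ coordSqNorm v i = 0) :
    weight n c₀ c₁ ξ v = ((ξ.1 * c₀ + ξ.2 * c₁) / 2 : ℝ) := by
  have hlim := (tendsto_sum_weightTerm_zero h).const_add ((ξ.1 * c₀ + ξ.2 * c₁) / 2)
  rw [add_zero] at hlim
  simp_rw [← momentAlongFlow_eq] at hlim
  exact (EReal.tendsto_coe.2 hlim).limsup_eq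

lemma weight_eq_top {i : Fin 3} (hs : flowExponent n ξ i < 0) (hK : 0 < coordSqNorm v i) :
    weight n c₀ c₁ ξ v = ⊤ := by
  have hlim := tendsto_atTop_add_const_left atTop ((ξ.1 * c₀ + ξ.2 * c₁) / 2)
    (tendsto_sum_weightTerm_atTop (coordSqNorm_nonneg v) hs hK)
  simp_rw [← momentAlongFlow_eq] at hlim
  exact (EReal.tendsto_coe_nhds_top_iff.2 hlim).limsup_eq

lemma isStable_of_ne_zero (hc₀ : 0 < c₀) (hc₁ : 0 < c₁) (hx : ¬(v.1 = 0 ∧ v.2.1 = 0))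
    (hy : ¬(v.2.2.1 = 0 ∧ v.2.2.2 = 0)) : IsStable n c₀ c₁ v := by
  intro ξ hξ
  by_cases hflow : ∃ i, flowExponent n ξ i < 0 ∧ 0 < coordSqNorm v i
  · obtain ⟨i, hs, hK⟩ := hflow
    rw [weight_eq_top hs hK]
    exact EReal.zero_lt_top
  have hbdd : ∀ i, 0 ≤ flowExponent n ξ i ∨ coordSqNorm v i = 0 := fun i => by
    rcases le_or_gt 0 (flowExponent n ξ i) with hs | hs
    · exact .inl hs
    · exact .inr ((not_lt.1 fun hK => hflow ⟨i, hs, hK⟩).antisymm (coordSqNorm_nonneg v i))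
  have ha : 0 ≤ ξ.1 := (hbdd 0).resolve_right (coordSqNorm_zero_eq_zero_iff.not.2 hx)
  have hb : 0 ≤ ξ.2 := by
    by_contra! hb
    have hbn : ξ.2 - n * ξ.1 < 0 := by nlinarith [Nat.cast_nonneg (α := ℝ) n]
    have hy₀ := (hbdd 1).resolve_left (by simpa [flowExponent] using hb)
    have hy₁ := (hbdd 2).resolve_left (by simpa [flowExponent] using hbn)
    exact hy ⟨by simpa [coordSqNorm] using hy₀, by simpa [coordSqNorm] using hy₁⟩
  rw [weight_eq_of_forall hbdd, EReal.coe_pos]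
  have : 0 < ξ.1 ∨ 0 < ξ.2 := by
    by_contra! h
    exact hξ (Prod.ext (le_antisymm h.1 ha) (le_antisymm h.2 hb))
  rcases this with h | h <;> nlinarith

lemma weight_neg_of_fst_eq_zero (hc₀ : 0 < c₀) (hx : v.1 = 0 ∧ v.2.1 = 0) :
    weight n c₀ c₁ (-1, 0) v < 0 := by
  rw [weight_eq_of_forall fun i => ?_, EReal.coe_neg']
  · linarith
  fin_cases i
  · exact .inr (coordSqNorm_zero_eq_zero_iff.2 hx)
  all_goals simp [flowExponent]

lemma weight_neg_of_snd_eq_zero (hc₁ : 0 < c₁) (hy : v.2.2.1 = 0 ∧ v.2.2.2 = 0) :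
    weight n c₀ c₁ (0, -1) v < 0 := by
  rw [weight_eq_of_forall fun i => ?_, EReal.coe_neg']
  · linarith
  fin_cases i
  · simp [flowExponent]
  all_goals simp [coordSqNorm, hy]

lemma IsStable.isSemistable (hv : IsStable n c₀ c₁ v) : IsSemistable n c₀ c₁ v :=
  fun ξ hξ => (hv ξ hξ).le

lemma ne_zero_of_isSemistable (hc₀ : 0 < c₀) (hc₁ : 0 < c₁) (hv : IsSemistable n c₀ c₁ v) :
    ¬(v.1 = 0 ∧ v.2.1 = 0) ∧ ¬(v.2.2.1 = 0 ∧ v.2.2.2 = 0) :=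
  ⟨fun hx => (hv _ (by simp)).not_gt (weight_neg_of_fst_eq_zero hc₀ hx),
    fun hy => (hv _ (by simp)).not_gt (weight_neg_of_snd_eq_zero hc₁ hy)⟩

end Stmt10

theorem statement10_general (n : ℕ) (c₀ c₁ : ℝ) (hc₀ : 0 < c₀) (hc₁ : 0 < c₁) :
    { v | Stmt10.IsStable n c₀ c₁ v } = { v | Stmt10.IsSemistable n c₀ c₁ v }
    ∧ { v | Stmt10.IsStable n c₀ c₁ v }
      = { v : ℂ × ℂ × ℂ × ℂ | ¬ (v.1 = 0 ∧ v.2.1 = 0) ∧ ¬ (v.2.2.1 = 0 ∧ v.2.2.2 = 0) } := by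
  open Stmt10 in
  exact ⟨Set.ext fun v => ⟨IsStable.isSemistable, fun hv =>
      isStable_of_ne_zero hc₀ hc₁ (ne_zero_of_isSemistable hc₀ hc₁ hv).1
        (ne_zero_of_isSemistable hc₀ hc₁ hv).2⟩,
    Set.ext fun v => ⟨fun hv => ne_zero_of_isSemistable hc₀ hc₁ hv.isSemistable,
      fun hv => isStable_of_ne_zero hc₀ hc₁ hv.1 hv.2⟩⟩

theorem statement10 (n : ℕ) (hn : 0 < n) (c₀ c₁ : ℝ) (hc₀ : 0 < c₀) (hc₁ : 0 < c₁) :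
    { v | Stmt10.IsStable n c₀ c₁ v } = { v | Stmt10.IsSemistable n c₀ c₁ v }
    ∧ { v | Stmt10.IsStable n c₀ c₁ v }
      = { v : ℂ × ℂ × ℂ × ℂ | ¬ (v.1 = 0 ∧ v.2.1 = 0) ∧ ¬ (v.2.2.1 = 0 ∧ v.2.2.2 = 0) } :=
  statement10_general n c₀ c₁ hc₀ hc₁
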